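/- Let g be a perfect Lie algebra with trivial center over a field of characteristic 0, X = k⊕g, R the associated Yang–Baxter operator. If φ is a Yang–Baxter 2-cocycle for R, then the map α: g⊗g → k defined by α(x,y) = (π₀⊗π₀)φ((0,x)⊗(0,y)) (composed with multiplication k⊗k → k) satisfies the Lie algebra 2-cocycle condition with trivial coefficients: α([x,y],z) = α([x,z],y) + α(x,[y,z]) for all x,y,z ∈ g. -/

import Mathlib

open TensorProduct

noncomputable section

variable (k : Type*) [CommRing k] (L : Type*) [LieRing L] [LieAlgebra k L]

abbrev X := k × L

/-- The self-distributive operation `q((a,x)⊗(b,y)) = (ab, b•x + ⁅x,y⁆)` as a bilinear map. -/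
def qc : X k L →ₗ[k] X k L →ₗ[k] X k L :=
  LinearMap.mk₂ k (fun u v => (u.1 * v.1, v.1 • u.2 + ⁅u.2, v.2⁆))
    (fun m₁ m₂ n => by
      simp only [Prod.fst_add, Prod.snd_add, Prod.mk_add_mk, Prod.mk.injEq]
      exact ⟨by ring, by rw [smul_add, add_lie]; abel⟩)
    (fun c m n => by
      simp only [Prod.smul_fst, Prod.smul_snd, Prod.smul_mk, smul_eq_mul, Prod.mk.injEq]
      exact ⟨by ring, by rw [smul_lie, smul_comm n.1 c, smul_add]⟩)
    (fun m n₁ n₂ => by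
      simp only [Prod.fst_add, Prod.snd_add, Prod.mk_add_mk, Prod.mk.injEq]
      exact ⟨by ring, by rw [add_smul, lie_add]; abel⟩)
    (fun c m n => by
      simp only [Prod.smul_fst, Prod.smul_snd, Prod.smul_mk, smul_eq_mul, Prod.mk.injEq]
      exact ⟨by ring, by rw [lie_smul, smul_add, mul_smul]⟩)

/-- The comultiplication `Δ(a,x) = (a,x)⊗(1,0) + (1,0)⊗(0,x)`. -/
def Delta : X k L →ₗ[k] X k L ⊗[k] X k L where
  toFun u := u ⊗ₜ (1, 0) + (1, 0) ⊗ₜ ((0 : k), u.2)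
  map_add' u v := by
    rw [show ((0 : k), (u + v).2) = ((0 : k), u.2) + ((0 : k), v.2) by
      simp [Prod.mk_add_mk]]
    rw [add_tmul, tmul_add]; abel
  map_smul' c u := by
    rw [show ((0 : k), (c • u).2) = c • ((0 : k), u.2) by simp [Prod.smul_mk],
      tmul_smul]
    simp [smul_add, smul_tmul']

/-- The counit `ε(a,x) = a`. -/
def eps : X k L →ₗ[k] k := LinearMap.fst k k L

/-- The Yang-Baxter operator `R(u ⊗ v) = v^{(1)} ⊗ q(u ⊗ v^{(2)})` associated to the
Lie algebra `L`. -/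
def Rop : X k L ⊗[k] X k L →ₗ[k] X k L ⊗[k] X k L :=
  TensorProduct.lift <| LinearMap.mk₂ k
    (fun u v => (LinearMap.lTensor (X k L) (qc k L u)) (Delta k L v))
    (fun u₁ u₂ v => by simp [map_add, LinearMap.lTensor_add, LinearMap.add_apply])
    (fun c u v => by simp [map_smul, LinearMap.lTensor_smul, LinearMap.smul_apply])
    (fun u v₁ v₂ => by simp)
    (fun c u v => by simp)

variable {k}

/-- `F ⊗ 1` acting on the first two factors of `V ⊗ (V ⊗ V)`. -/
def map12 {V : Type*} [AddCommGroup V] [Module k V]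
    (F : V ⊗[k] V →ₗ[k] V ⊗[k] V) :
    V ⊗[k] (V ⊗[k] V) →ₗ[k] V ⊗[k] (V ⊗[k] V) :=
  (TensorProduct.assoc k V V V).toLinearMap ∘ₗ F.rTensor V ∘ₗ
    (TensorProduct.assoc k V V V).symm.toLinearMap

/-- `1 ⊗ F` acting on the last two factors of `V ⊗ (V ⊗ V)`. -/
def map23 {V : Type*} [AddCommGroup V] [Module k V]
    (F : V ⊗[k] V →ₗ[k] V ⊗[k] V) :
    V ⊗[k] (V ⊗[k] V) →ₗ[k] V ⊗[k] (V ⊗[k] V) :=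
  F.lTensor V

/-- The Yang-Baxter equation for an operator `F : V ⊗ V → V ⊗ V`. -/
def YBE {V : Type*} [AddCommGroup V] [Module k V]
    (F : V ⊗[k] V →ₗ[k] V ⊗[k] V) : Prop :=
  map12 F ∘ₗ map23 F ∘ₗ map12 F = map23 F ∘ₗ map12 F ∘ₗ map23 F

/-- The second Yang-Baxter differential. -/
def dYB {V : Type*} [AddCommGroup V] [Module k V]
    (R φ : V ⊗[k] V →ₗ[k] V ⊗[k] V) :
    V ⊗[k] (V ⊗[k] V) →ₗ[k] V ⊗[k] (V ⊗[k] V) :=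
  map12 R ∘ₗ map23 R ∘ₗ map12 φ + map12 R ∘ₗ map23 φ ∘ₗ map12 R +
    map12 φ ∘ₗ map23 R ∘ₗ map12 R - map23 R ∘ₗ map12 R ∘ₗ map23 φ -
    map23 R ∘ₗ map12 φ ∘ₗ map23 R - map23 φ ∘ₗ map12 R ∘ₗ map23 R

/-- The first Yang-Baxter differential. -/
def dYB1 {V : Type*} [AddCommGroup V] [Module k V]
    (R : V ⊗[k] V →ₗ[k] V ⊗[k] V) (f : V →ₗ[k] V) :
    V ⊗[k] V →ₗ[k] V ⊗[k] V :=
  R ∘ₗ f.rTensor V + R ∘ₗ f.lTensor V - f.rTensor V ∘ₗ R - f.lTensor V ∘ₗ R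

end

open TensorProduct

/-- The scalar part of a YB 2-cocycle:
`α(x,y) = mult ∘ (π₀⊗π₀) (φ((0,x)⊗(0,y)))`. -/
noncomputable def alphaOf {k : Type*} [Field k] {L : Type*} [LieRing L] [LieAlgebra k L]
    (φ : X k L ⊗[k] X k L →ₗ[k] X k L ⊗[k] X k L) (x y : L) : k :=
  LinearMap.mul' k k
    (TensorProduct.map (LinearMap.fst k k L) (LinearMap.fst k k L)
      (φ ((((0 : k), x) : X k L) ⊗ₜ[k] (((0 : k), y) : X k L))))

/-!
Apply the multiplicative counit `ε ⊗ ε ⊗ ε` (with `ε = π₀`) to the cocycle identity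
`δ²φ (x ⊗ y ⊗ z) = 0` for `x, y, z ∈ L`. Since `R(u ⊗ v) = v ⊗ u + 1 ⊗ [u, v]`, the
functional `ε ⊗ ε` is `R`-invariant, so every `R` applied after `φ` disappears. Of the six
remaining terms, four vanish because `ε` kills a factor from `L` that `φ` does not touch;
the other two are `α([x,y],z)` and `α([x,z],y) + α(x,[y,z])`.
-/

section Counit

variable {k V : Type*} [CommRing k] [AddCommGroup V] [Module k V] (ε : V →ₗ[k] k)

noncomputable def counit₂ : V ⊗[k] V →ₗ[k] k :=
  LinearMap.mul' k k ∘ₗ map ε ε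

noncomputable def counit₃ : V ⊗[k] (V ⊗[k] V) →ₗ[k] k :=
  LinearMap.mul' k k ∘ₗ map ε (counit₂ ε)

@[simp] lemma counit₂_tmul (u v : V) : counit₂ ε (u ⊗ₜ v) = ε u * ε v := rfl

@[simp] lemma counit₃_tmul (u : V) (s : V ⊗[k] V) :
    counit₃ ε (u ⊗ₜ s) = ε u * counit₂ ε s := rfl

lemma counit₃_comp_assoc :
    counit₃ ε ∘ₗ (TensorProduct.assoc k V V V).toLinearMap =
      LinearMap.mul' k k ∘ₗ map (counit₂ ε) ε :=
  ext_threefold fun u v w => by simp [mul_assoc]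

lemma counit₃_map12_tmul (F : V ⊗[k] V →ₗ[k] V ⊗[k] V) (u v w : V) :
    counit₃ ε (map12 F (u ⊗ₜ (v ⊗ₜ w))) = counit₂ ε (F (u ⊗ₜ v)) * ε w := by
  simpa [map12] using LinearMap.congr_fun (counit₃_comp_assoc ε) (F (u ⊗ₜ v) ⊗ₜ w)

lemma counit₃_map23_tmul (F : V ⊗[k] V →ₗ[k] V ⊗[k] V) (u : V) (s : V ⊗[k] V) :
    counit₃ ε (map23 F (u ⊗ₜ s)) = ε u * counit₂ ε (F s) := rfl

variable {ε} {F : V ⊗[k] V →ₗ[k] V ⊗[k] V}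

lemma counit₃_comp_map12 (hF : counit₂ ε ∘ₗ F = counit₂ ε) :
    counit₃ ε ∘ₗ map12 F = counit₃ ε :=
  ext_threefold' fun u v w => by
    rw [LinearMap.comp_apply, counit₃_map12_tmul, ← LinearMap.comp_apply (counit₂ ε), hF]
    simp [mul_assoc]

lemma counit₃_comp_map23 (hF : counit₂ ε ∘ₗ F = counit₂ ε) :
    counit₃ ε ∘ₗ map23 F = counit₃ ε := by
  rw [map23, counit₃, LinearMap.comp_assoc, LinearMap.map_comp_lTensor, hF]

lemma counit₃_dYB_apply {R : V ⊗[k] V →ₗ[k] V ⊗[k] V} (hR : counit₂ ε ∘ₗ R = counit₂ ε)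
    (φ : V ⊗[k] V →ₗ[k] V ⊗[k] V) (t : V ⊗[k] (V ⊗[k] V)) :
    counit₃ ε (dYB R φ t) =
      counit₃ ε (map12 φ t) + counit₃ ε (map23 φ (map12 R t)) +
        counit₃ ε (map12 φ (map23 R (map12 R t))) - counit₃ ε (map23 φ t) -
        counit₃ ε (map12 φ (map23 R t)) - counit₃ ε (map23 φ (map12 R (map23 R t))) := by
  have h12 (s) : counit₃ ε (map12 R s) = counit₃ ε s :=
    LinearMap.congr_fun (counit₃_comp_map12 hR) s
  have h23 (s) : counit₃ ε (map23 R s) = counit₃ ε s :=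
    LinearMap.congr_fun (counit₃_comp_map23 hR) s
  simp only [dYB, LinearMap.sub_apply, LinearMap.add_apply, LinearMap.comp_apply, map_add,
    map_sub, h12, h23]

end Counit

section YangBaxterOperator

variable {k : Type*} [CommRing k] {L : Type*} [LieRing L] [LieAlgebra k L]

lemma Rop_tmul (u v : X k L) :
    Rop k L (u ⊗ₜ v) = v ⊗ₜ u + ((1 : k), (0 : L)) ⊗ₜ ((0 : k), ⁅u.2, v.2⁆) := by
  change (qc k L u).lTensor _ (v ⊗ₜ ((1 : k), (0 : L)) + ((1 : k), (0 : L)) ⊗ₜ (0, v.2)) = _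
  simp [qc]

lemma counit₂_comp_Rop :
    counit₂ (LinearMap.fst k k L) ∘ₗ Rop k L = counit₂ (LinearMap.fst k k L) :=
  TensorProduct.ext' fun u v => by simp [Rop_tmul, mul_comm]

lemma map12_Rop_tmul (u v w : X k L) :
    map12 (Rop k L) (u ⊗ₜ (v ⊗ₜ w)) =
      v ⊗ₜ (u ⊗ₜ w) + ((1 : k), (0 : L)) ⊗ₜ (((0 : k), ⁅u.2, v.2⁆) ⊗ₜ w) := by
  simp [map12, Rop_tmul, add_tmul]

lemma map23_Rop_tmul (u v w : X k L) :
    map23 (Rop k L) (u ⊗ₜ (v ⊗ₜ w)) =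
      u ⊗ₜ (w ⊗ₜ v) + u ⊗ₜ (((1 : k), (0 : L)) ⊗ₜ ((0 : k), ⁅v.2, w.2⁆)) := by
  simp [map23, Rop_tmul, tmul_add]

end YangBaxterOperator

lemma alphaOf_eq_counit₂ {k : Type*} [Field k] {L : Type*} [LieRing L] [LieAlgebra k L]
    (φ : X k L ⊗[k] X k L →ₗ[k] X k L ⊗[k] X k L) (x y : L) :
    alphaOf φ x y = counit₂ (LinearMap.fst k k L) (φ (((0 : k), x) ⊗ₜ ((0 : k), y))) :=
  rfl

lemma counit₃_dYB_Rop_apply {k : Type*} [Field k] {L : Type*} [LieRing L] [LieAlgebra k L]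
    (φ : X k L ⊗[k] X k L →ₗ[k] X k L ⊗[k] X k L) (x y z : L) :
    counit₃ (LinearMap.fst k k L)
        (dYB (Rop k L) φ (((0 : k), x) ⊗ₜ (((0 : k), y) ⊗ₜ ((0 : k), z)))) =
      alphaOf φ ⁅x, y⁆ z - (alphaOf φ ⁅x, z⁆ y + alphaOf φ x ⁅y, z⁆) := by
  rw [counit₃_dYB_apply counit₂_comp_Rop]
  simp only [map12_Rop_tmul, map23_Rop_tmul, map_add, counit₃_map12_tmul, counit₃_map23_tmul,
    LinearMap.fst_apply, lie_zero, Prod.mk_zero_zero, zero_tmul, tmul_zero, mul_zero,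
    zero_mul, one_mul, zero_add, add_zero, sub_zero, ← alphaOf_eq_counit₂]


theorem alpha_is_lie_cocycle_general {k : Type*} [Field k] {L : Type*}
    [LieRing L] [LieAlgebra k L]
    (φ : X k L ⊗[k] X k L →ₗ[k] X k L ⊗[k] X k L)
    (hφ : dYB (Rop k L) φ = 0) :
    ∀ x y z : L, alphaOf φ ⁅x, y⁆ z = alphaOf φ ⁅x, z⁆ y + alphaOf φ x ⁅y, z⁆ := by
  intro x y z
  rw [← sub_eq_zero, ← counit₃_dYB_Rop_apply, hφ, LinearMap.zero_apply, map_zero]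

/-- For a perfect Lie algebra with trivial center over a field of characteristic 0
and a YB 2-cocycle `φ` for the associated Yang-Baxter operator, the scalar part
`α` is a Lie algebra 2-cocycle with trivial coefficients. -/
theorem alpha_is_lie_cocycle {k : Type*} [Field k] [CharZero k] {L : Type*}
    [LieRing L] [LieAlgebra k L]
    (hperf : ⁅(⊤ : LieIdeal k L), (⊤ : LieIdeal k L)⁆ = ⊤)
    (hcenter : LieAlgebra.center k L = ⊥)
    (φ : X k L ⊗[k] X k L →ₗ[k] X k L ⊗[k] X k L)
    (hφ : dYB (Rop k L) φ = 0) :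
    ∀ x y z : L, alphaOf φ ⁅x, y⁆ z = alphaOf φ ⁅x, z⁆ y + alphaOf φ x ⁅y, z⁆ :=
  alpha_is_lie_cocycle_general φ hφ
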